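/- arXiv:2003.03236 — 2 statements merged into one kernel-verified Lean document; each statement's English description precedes it below -/
import Mathlib

section
/- Let W be a condensed wall (of any size) with special vertices a and b. Then every ladder contained in W − {a, b} has at most 5 rungs. -/
open SimpleGraph

/-- The elementary ladder with `n` rungs: vertices `(i, s)` for `i < n`, `s : Bool`;
the two stringers are the paths `(0,s), (1,s), …, (n-1,s)` and the rungs are the
edges between `(i, false)` and `(i, true)`. -/
def elemLadder (n : ℕ) : SimpleGraph (Fin n × Bool) :=
  SimpleGraph.fromRel (fun x y =>
    (x.2 = y.2 ∧ (y.1 : ℕ) = (x.1 : ℕ) + 1) ∨ (x.1 = y.1 ∧ x.2 ≠ y.2))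

/-- A subdivision copy of the graph `H` inside the graph `G`:  an injective choice of
branch vertices together with, for every edge of `H`, a path of `G` between the
corresponding branch vertices, such that distinct edge-paths meet only in common
branch endvertices and no branch vertex lies in the interior of an edge-path. -/
structure SubdivCopy {U V : Type} (H : SimpleGraph U) (G : SimpleGraph V) where
  branch : U → V
  branch_inj : Function.Injective branch
  walk : ∀ ⦃a b : U⦄, H.Adj a b → G.Walk (branch a) (branch b)
  walk_isPath : ∀ ⦃a b : U⦄ (h : H.Adj a b), (walk h).IsPath
  walk_symm : ∀ ⦃a b : U⦄ (h : H.Adj a b), walk h.symm = (walk h).reverse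
  walk_disj : ∀ ⦃a b a' b' : U⦄ (h : H.Adj a b) (h' : H.Adj a' b'), s(a, b) ≠ s(a', b') →
    ∀ x, x ∈ (walk h).support → x ∈ (walk h').support →
      (x = branch a ∨ x = branch b) ∧ (x = branch a' ∨ x = branch b')
  branch_not_interior : ∀ ⦃a b : U⦄ (h : H.Adj a b) (c : U),
    branch c ∈ (walk h).support → c = a ∨ c = b

/-- The vertex set of a subdivision copy. -/
def SubdivCopy.verts {U V : Type} {H : SimpleGraph U} {G : SimpleGraph V}
    (S : SubdivCopy H G) : Set V :=
  Set.range S.branch ∪ {x | ∃ (a b : U) (h : H.Adj a b), x ∈ (S.walk h).support}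

/-- The edge set of a subdivision copy. -/
def SubdivCopy.edges {U V : Type} {H : SimpleGraph U} {G : SimpleGraph V}
    (S : SubdivCopy H G) : Set (Sym2 V) :=
  {e | ∃ (a b : U) (h : H.Adj a b), e ∈ (S.walk h).edges}

/-- `H` is a minor of `G`: there are nonempty, pairwise disjoint, connected branch
sets in `G`, one for each vertex of `H`, with an edge of `G` between the branch sets
of any two adjacent vertices of `H`. -/
def IsMinor {U V : Type} (H : SimpleGraph U) (G : SimpleGraph V) : Prop :=
  ∃ f : U → Set V,
    (∀ u, (f u).Nonempty) ∧
    (∀ u, (G.induce (f u)).Connected) ∧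
    (∀ u u', u ≠ u' → Disjoint (f u) (f u')) ∧
    (∀ u u', H.Adj u u' → ∃ x ∈ f u, ∃ y ∈ f u', G.Adj x y)

/-- The vertex type of a condensed wall of size `r`: the path vertices `u^j_k`
(`j` indexes the `r` horizontal paths, `k` the `2r` positions, both 0-indexed),
the bottleneck vertices `z_0, …, z_r`, and the two special vertices `a`, `b`. -/
def CWVert (r : ℕ) : Type := (Fin r × Fin (2 * r)) ⊕ (Fin (r + 1) ⊕ Bool)

/-- The path vertex `u^{j+1}_{k+1}` (so `j`, `k` are 0-indexed). -/
def cwU {r : ℕ} (j : Fin r) (k : Fin (2 * r)) : CWVert r := Sum.inl (j, k)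

/-- The bottleneck vertex `z_i`. -/
def cwZ {r : ℕ} (i : Fin (r + 1)) : CWVert r := Sum.inr (Sum.inl i)

/-- The special vertex `a` of the condensed wall. -/
def cwA (r : ℕ) : CWVert r := Sum.inr (Sum.inr false)

/-- The special vertex `b` of the condensed wall. -/
def cwB (r : ℕ) : CWVert r := Sum.inr (Sum.inr true)

/-- The vertex `c = z_0` of the condensed wall. -/
def cwC (r : ℕ) : CWVert r := cwZ (0 : Fin (r + 1))

/-- The vertex `d = z_r` of the condensed wall. -/
def cwD (r : ℕ) : CWVert r := cwZ (Fin.last r)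

/-- The condensed wall of size `r`: for each `j ∈ [r]` a path `u^j_1 … u^j_{2r}`,
with `z_{j-1}` joined to the odd-position vertices and `z_j` to the even-position
vertices of that path, consecutive `z`'s joined by an edge, `a` joined to all
`u^j_1` and `b` joined to all `u^j_{2r}`. -/
def condensedWall (r : ℕ) : SimpleGraph (CWVert r) :=
  SimpleGraph.fromRel (fun x y =>
    match x, y with
    | Sum.inl (j, k), Sum.inl (j', k') => j = j' ∧ (k' : ℕ) = (k : ℕ) + 1
    | Sum.inr (Sum.inl i), Sum.inr (Sum.inl i') => (i' : ℕ) = (i : ℕ) + 1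
    | Sum.inr (Sum.inl i), Sum.inl (j, k) =>
        ((i : ℕ) = (j : ℕ) ∧ (k : ℕ) % 2 = 0) ∨
        ((i : ℕ) = (j : ℕ) + 1 ∧ (k : ℕ) % 2 = 1)
    | Sum.inr (Sum.inr false), Sum.inl (_, k) => (k : ℕ) = 0
    | Sum.inr (Sum.inr true), Sum.inl (_, k) => (k : ℕ) + 1 = 2 * r
    | _, _ => False)

/-- A vertex of the condensed wall is a bottleneck vertex if it is one of the `z_i`. -/
def IsBottleneck {r : ℕ} (x : CWVert r) : Prop := ∃ i : Fin (r + 1), x = cwZ i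

/-- The vertex set of the `j`-th layer of the condensed wall of size `r`
(0-indexed `j`): the vertices `u^j_1, …, u^j_{2r}` together with `z_{j-1}` and `z_j`. -/
def layerVerts (r : ℕ) (j : Fin r) : Set (CWVert r) :=
  {x | (∃ k, x = cwU j k) ∨ x = cwZ j.castSucc ∨ x = cwZ j.succ}

/-- An X-wing in a graph `G` with designated vertices `a`, `b`, `c`, `d`: a ladder with
three rungs, two disjoint paths joining the endvertices of its first rung to `a` and
to `b`, and two further disjoint paths joining the endvertices of its last rung to `c`
and to `d`, all four paths internally disjoint from each other and from the ladder. -/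
structure XWing {V : Type} (G : SimpleGraph V) (a b c d : V) where
  L : SubdivCopy (elemLadder 3) G
  Pa : G.Walk (L.branch (0, false)) a
  Pb : G.Walk (L.branch (0, true)) b
  Pc : G.Walk (L.branch (2, false)) c
  Pd : G.Walk (L.branch (2, true)) d
  Pa_isPath : Pa.IsPath
  Pb_isPath : Pb.IsPath
  Pc_isPath : Pc.IsPath
  Pd_isPath : Pd.IsPath
  disj_ab : ∀ x, x ∈ Pa.support → x ∉ Pb.support
  disj_ac : ∀ x, x ∈ Pa.support → x ∉ Pc.support
  disj_ad : ∀ x, x ∈ Pa.support → x ∉ Pd.support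
  disj_bc : ∀ x, x ∈ Pb.support → x ∉ Pc.support
  disj_bd : ∀ x, x ∈ Pb.support → x ∉ Pd.support
  disj_cd : ∀ x, x ∈ Pc.support → x ∉ Pd.support
  Pa_L : ∀ x ∈ Pa.support, x ∈ L.verts → x = L.branch (0, false)
  Pb_L : ∀ x ∈ Pb.support, x ∈ L.verts → x = L.branch (0, true)
  Pc_L : ∀ x ∈ Pc.support, x ∈ L.verts → x = L.branch (2, false)
  Pd_L : ∀ x ∈ Pd.support, x ∈ L.verts → x = L.branch (2, true)

/-- The vertex set of an X-wing. -/
def XWing.wverts {V : Type} {G : SimpleGraph V} {a b c d : V} (X : XWing G a b c d) :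
    Set V :=
  X.L.verts ∪ {x | x ∈ X.Pa.support} ∪ {x | x ∈ X.Pb.support} ∪
    {x | x ∈ X.Pc.support} ∪ {x | x ∈ X.Pd.support}

/-- The edge set of an X-wing. -/
def XWing.wedges {V : Type} {G : SimpleGraph V} {a b c d : V} (X : XWing G a b c d) :
    Set (Sym2 V) :=
  X.L.edges ∪ {e | e ∈ X.Pa.edges} ∪ {e | e ∈ X.Pb.edges} ∪
    {e | e ∈ X.Pc.edges} ∪ {e | e ∈ X.Pd.edges}

/-- The vertex set of the condensed wall of size `r` without `a` and `b`. -/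
def WMVert (r : ℕ) : Type := {x : CWVert r // x ≠ cwA r ∧ x ≠ cwB r}

/-- The condensed wall of size `r` with the two vertices `a` and `b` deleted. -/
def wallMinusAB (r : ℕ) : SimpleGraph (WMVert r) :=
  (condensedWall r).induce {x | x ≠ cwA r ∧ x ≠ cwB r}

/-! In `W - {a, b}` every bottleneck vertex `z_m` separates the layers below it from those
above it, and a cut vertex cannot separate two vertices of a cycle; since the bottleneck
vertices alone induce a path, every cycle lies in a single layer `P^j ∪ {z_{j-1}, z_j}`.
Consecutive squares of a ladder share two vertices while distinct layers share at most one,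
so all squares of a ladder lie in one layer. A layer minus its two bottleneck vertices is the
path `P^j`, so every square contains `z_{j-1}` or `z_j`; but a ladder with six rungs has
three pairwise disjoint squares. -/

namespace SimpleGraph

variable {V β : Type*} {G : SimpleGraph V}

/-- A cycle `A - B - D - C - A` of `G`, cut into four paths at its corners. -/
structure Square (G : SimpleGraph V) where
  {A B C D : V}
  top : G.Walk A B
  bot : G.Walk C D
  left : G.Walk A C
  right : G.Walk B D
  top_isPath : top.IsPath
  bot_isPath : bot.IsPath
  left_isPath : left.IsPath
  right_isPath : right.IsPath
  top_bot : ∀ x ∈ top.support, x ∉ bot.support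
  left_right : ∀ x ∈ left.support, x ∉ right.support
  top_left : ∀ x ∈ top.support, x ∈ left.support → x = A
  top_right : ∀ x ∈ top.support, x ∈ right.support → x = B
  bot_left : ∀ x ∈ bot.support, x ∈ left.support → x = C
  bot_right : ∀ x ∈ bot.support, x ∈ right.support → x = D

namespace Square

variable (Q : G.Square)

def verts : Set V :=
  {x | x ∈ Q.top.support ∨ x ∈ Q.bot.support ∨ x ∈ Q.left.support ∨ x ∈ Q.right.support}

def mirror : G.Square where
  top := Q.top.reverse
  bot := Q.bot.reverse
  left := Q.right
  right := Q.left
  top_isPath := Q.top_isPath.reverse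
  bot_isPath := Q.bot_isPath.reverse
  left_isPath := Q.right_isPath
  right_isPath := Q.left_isPath
  top_bot := by simpa using Q.top_bot
  left_right x hx hx' := Q.left_right x hx' hx
  top_left := by simpa using Q.top_right
  top_right := by simpa using Q.top_left
  bot_left := by simpa using Q.bot_right
  bot_right := by simpa using Q.bot_left

def flip : G.Square where
  top := Q.bot
  bot := Q.top
  left := Q.left.reverse
  right := Q.right.reverse
  top_isPath := Q.bot_isPath
  bot_isPath := Q.top_isPath
  left_isPath := Q.left_isPath.reverse
  right_isPath := Q.right_isPath.reverse
  top_bot x hx hx' := Q.top_bot x hx' hx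
  left_right := by simpa using Q.left_right
  top_left := by simpa using Q.bot_left
  top_right := by simpa using Q.bot_right
  bot_left := by simpa using Q.top_left
  bot_right := by simpa using Q.top_right

lemma C_ne_D : Q.C ≠ Q.D := by
  intro h
  have hD : Q.D ∈ Q.left.support := by
    rw [← h]
    exact Q.left.end_mem_support
  exact Q.left_right _ hD Q.right.end_mem_support

@[simp]
lemma verts_mirror : Q.mirror.verts = Q.verts := by
  ext x; simp only [verts, mirror, Walk.support_reverse, List.mem_reverse, Set.mem_ofPred_eq]; tauto

@[simp]
lemma verts_flip : Q.flip.verts = Q.verts := by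
  ext x; simp only [verts, flip, Walk.support_reverse, List.mem_reverse, Set.mem_ofPred_eq]; tauto

end Square

lemma Walk.IsPath.eq_of_mem_support_of_loop {u v : V} {p : G.Walk u u} (hp : p.IsPath)
    (hv : v ∈ p.support) : v = u := by
  simpa [Walk.nil_iff_support_eq.mp (Walk.isPath_iff_nil.mp hp)] using hv

def IsLocallyConstOff (G : SimpleGraph V) (z : V) (f : V → β) : Prop :=
  ∀ ⦃x y⦄, G.Adj x y → x ≠ z → y ≠ z → f x = f y

namespace IsLocallyConstOff

variable {z : V} {f : V → β}

lemma eq_of_notMem_support (hf : G.IsLocallyConstOff z f) {x y : V} (p : G.Walk x y)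
    (hz : z ∉ p.support) : ∀ v ∈ p.support, f v = f x := by
  induction p with
  | nil => simp
  | @cons x x' y h q ih =>
    simp only [Walk.support_cons, List.mem_cons, not_or] at hz ⊢
    have hxx' : f x' = f x := (hf h (Ne.symm hz.1) fun h' => hz.2 (h' ▸ q.start_mem_support)).symm
    rintro v (rfl | hv)
    · rfl
    · exact (ih hz.2 v hv).trans hxx'

lemma eq_of_isPath_to (hf : G.IsLocallyConstOff z f) {x : V} {p : G.Walk x z}
    (hp : p.IsPath) : ∀ v ∈ p.support, v ≠ z → f v = f x := by
  induction p with
  | nil => simp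
  | @cons x x' z h q ih =>
    rw [Walk.cons_isPath_iff] at hp
    simp only [Walk.support_cons, List.mem_cons]
    rintro v (rfl | hv) hvz
    · rfl
    · have hx'z : x' ≠ z := by
        rintro rfl
        exact hvz (hp.1.eq_of_mem_support_of_loop hv)
      have hxz : x ≠ z := fun h' => hp.2 (h' ▸ q.end_mem_support)
      exact (ih hf hp.1 v hv hvz).trans (hf h hxz hx'z).symm

lemma eq_of_isPath (hf : G.IsLocallyConstOff z f) {x y : V} {p : G.Walk x y}
    (hp : p.IsPath) (hy : y ≠ z → f y = f x) :
    ∀ v ∈ p.support, v ≠ z → f v = f x := by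
  classical
  by_cases hz : z ∈ p.support
  · intro v hv hvz
    rw [← p.take_spec hz, Walk.mem_support_append_iff] at hv
    rcases hv with hv | hv
    · exact hf.eq_of_isPath_to (hp.takeUntil hz) v hv hvz
    · have hv' : v ∈ (p.dropUntil z hz).reverse.support := by simpa using hv
      have hyz : y ≠ z := by
        rintro rfl
        exact hvz ((hp.dropUntil hz).eq_of_mem_support_of_loop hv)
      exact (hf.eq_of_isPath_to (hp.dropUntil hz).reverse v hv' hvz).trans (hy hyz)
  · exact fun v hv _ => hf.eq_of_notMem_support p hz v hv

end IsLocallyConstOff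

namespace Square

variable {z : V} {f : V → β}

lemma eq_of_notMem_top_left (Q : G.Square) (hf : G.IsLocallyConstOff z f)
    (htop : z ∉ Q.top.support) (hleft : z ∉ Q.left.support) :
    ∀ v ∈ Q.verts, v ≠ z → f v = f Q.A := by
  have fB : f Q.B = f Q.A := hf.eq_of_notMem_support Q.top htop _ Q.top.end_mem_support
  have fC : f Q.C = f Q.A := hf.eq_of_notMem_support Q.left hleft _ Q.left.end_mem_support
  have fD : Q.D ≠ z → f Q.D = f Q.A := by
    intro hD
    by_cases hbot : z ∈ Q.bot.support
    · have hright : z ∉ Q.right.support := fun h => hD (Q.bot_right z hbot h).symm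
      exact (hf.eq_of_notMem_support Q.right hright _ Q.right.end_mem_support).trans fB
    · exact (hf.eq_of_notMem_support Q.bot hbot _ Q.bot.end_mem_support).trans fC
  rintro v (hv | hv | hv | hv) hvz
  · exact hf.eq_of_notMem_support Q.top htop v hv
  · exact (hf.eq_of_isPath Q.bot_isPath (fun h => (fD h).trans fC.symm) v hv hvz).trans fC
  · exact hf.eq_of_notMem_support Q.left hleft v hv
  · exact (hf.eq_of_isPath Q.right_isPath (fun h => (fD h).trans fB.symm) v hv hvz).trans fB

/-- A cut vertex cannot separate two vertices of a cycle. -/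
lemma eq_of_mem_verts (Q : G.Square) (hf : G.IsLocallyConstOff z f) {v w : V}
    (hv : v ∈ Q.verts) (hw : w ∈ Q.verts) (hvz : v ≠ z) (hwz : w ≠ z) : f v = f w := by
  suffices ∃ s, ∀ u ∈ Q.verts, u ≠ z → f u = s by
    obtain ⟨s, hs⟩ := this
    exact (hs v hv hvz).trans (hs w hw hwz).symm
  have htb : z ∉ Q.top.support ∨ z ∉ Q.bot.support := by
    by_contra! h; exact Q.top_bot z h.1 h.2
  have hlr : z ∉ Q.left.support ∨ z ∉ Q.right.support := by
    by_contra! h; exact Q.left_right z h.1 h.2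
  rcases htb with ht | hb <;> rcases hlr with hl | hr
  · exact ⟨_, Q.eq_of_notMem_top_left hf ht hl⟩
  · exact ⟨_, by simpa using Q.mirror.eq_of_notMem_top_left hf (by simpa [mirror]) hr⟩
  · exact ⟨_, by simpa using Q.flip.eq_of_notMem_top_left hf hb (by simpa [flip])⟩
  · have h := Q.flip.mirror.eq_of_notMem_top_left hf (by simpa [flip, mirror])
      (by simpa [flip, mirror])
    exact ⟨_, by simpa using h⟩

end Square

/-- `κ` embeds the subgraph of `G` induced on `T` into the path `0 - 1 - 2 - ⋯`. -/
def IsPathCoordOn (G : SimpleGraph V) (T : Set V) (κ : V → ℕ) : Prop :=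
  Set.InjOn κ T ∧ ∀ x ∈ T, ∀ y ∈ T, G.Adj x y → κ y ≤ κ x + 1

lemma Walk.exists_mem_support_eq {T : Set V} {κ : V → ℕ}
    (hκ : ∀ x ∈ T, ∀ y ∈ T, G.Adj x y → κ y ≤ κ x + 1) {x y : V} (p : G.Walk x y)
    (hp : ∀ v ∈ p.support, v ∈ T) {t : ℕ} (h₁ : min (κ x) (κ y) ≤ t) (h₂ : t ≤ max (κ x) (κ y)) :
    ∃ v ∈ p.support, κ v = t := by
  induction p with
  | @nil u => exact ⟨u, by simp, by omega⟩
  | @cons x x' y h q ih =>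
    simp only [Walk.support_cons, List.mem_cons, forall_eq_or_imp, exists_eq_or_imp] at hp ⊢
    by_cases hxt : κ x = t
    · exact Or.inl hxt
    · have := hκ x hp.1 x' (hp.2 _ q.start_mem_support) h
      have := hκ x' (hp.2 _ q.start_mem_support) x hp.1 h.symm
      exact Or.inr (ih hp.2 (by omega) (by omega))

lemma Walk.exists_mem_support_of_overlap {T : Set V} {κ : V → ℕ} (hκ : G.IsPathCoordOn T κ)
    {a b c d : V} (p : G.Walk a b) (q : G.Walk c d) (hp : ∀ v ∈ p.support, v ∈ T)
    (hq : ∀ v ∈ q.support, v ∈ T)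
    (h : max (min (κ a) (κ b)) (min (κ c) (κ d)) ≤ min (max (κ a) (κ b)) (max (κ c) (κ d))) :
    ∃ v ∈ p.support, v ∈ q.support := by
  obtain ⟨v, hv, hvt⟩ := p.exists_mem_support_eq hκ.2 hp
    (t := max (min (κ a) (κ b)) (min (κ c) (κ d))) (by omega) (by omega)
  obtain ⟨w, hw, hwt⟩ := q.exists_mem_support_eq hκ.2 hq
    (t := max (min (κ a) (κ b)) (min (κ c) (κ d))) (by omega) (by omega)
  exact ⟨v, hv, hκ.1 (hp v hv) (hq w hw) (hvt.trans hwt.symm) ▸ hw⟩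

lemma Square.not_verts_subset {T : Set V} {κ : V → ℕ} (hκ : G.IsPathCoordOn T κ)
    (Q : G.Square) : ¬ Q.verts ⊆ T := by
  intro hT
  by_cases h : max (min (κ Q.A) (κ Q.B)) (min (κ Q.C) (κ Q.D)) ≤
      min (max (κ Q.A) (κ Q.B)) (max (κ Q.C) (κ Q.D))
  · obtain ⟨v, hv, hv'⟩ := Q.top.exists_mem_support_of_overlap hκ Q.bot
      (fun v hv => hT (Or.inl hv)) (fun v hv => hT (Or.inr (Or.inl hv))) h
    exact Q.top_bot v hv hv'
  · obtain ⟨v, hv, hv'⟩ := Q.left.exists_mem_support_of_overlap hκ Q.right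
      (fun v hv => hT (Or.inr (Or.inr (Or.inl hv))))
      (fun v hv => hT (Or.inr (Or.inr (Or.inr hv)))) (by omega)
    exact Q.left_right v hv hv'

end SimpleGraph

namespace SubdivCopy

variable {U V : Type} {H : SimpleGraph U} {G : SimpleGraph V} (S : SubdivCopy H G)

lemma exists_common_endpoint {a b a' b' : U} (h : H.Adj a b) (h' : H.Adj a' b')
    (hne : s(a, b) ≠ s(a', b')) {x : V} (hx : x ∈ (S.walk h).support)
    (hx' : x ∈ (S.walk h').support) :
    ∃ c, (c = a ∨ c = b) ∧ (c = a' ∨ c = b') ∧ x = S.branch c := by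
  obtain ⟨h₁, h₂⟩ := S.walk_disj h h' hne x hx hx'
  rcases h₁ with rfl | rfl
  · exact ⟨a, Or.inl rfl, h₂.imp (fun e => S.branch_inj e) (fun e => S.branch_inj e), rfl⟩
  · exact ⟨b, Or.inr rfl, h₂.imp (fun e => S.branch_inj e) (fun e => S.branch_inj e), rfl⟩

lemma eq_branch_of_mem_support {a b a' b' c : U} (h : H.Adj a b) (h' : H.Adj a' b')
    (hc : ∀ d, (d = a ∨ d = b) → (d = a' ∨ d = b') → d = c) {x : V}
    (hx : x ∈ (S.walk h).support) (hx' : x ∈ (S.walk h').support) : x = S.branch c := by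
  have hne : s(a, b) ≠ s(a', b') := by
    rw [Ne, Sym2.eq_iff]
    rintro (⟨rfl, rfl⟩ | ⟨rfl, rfl⟩)
    · exact h.ne ((hc _ (Or.inl rfl) (Or.inl rfl)).trans (hc _ (Or.inr rfl) (Or.inr rfl)).symm)
    · exact h.ne ((hc _ (Or.inl rfl) (Or.inr rfl)).trans (hc _ (Or.inr rfl) (Or.inl rfl)).symm)
  obtain ⟨d, hd, hd', rfl⟩ := S.exists_common_endpoint h h' hne hx hx'
  rw [hc d hd hd']

lemma notMem_support {a b a' b' : U} (h : H.Adj a b) (h' : H.Adj a' b')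
    (hc : ∀ d, (d = a ∨ d = b) → (d = a' ∨ d = b') → False) :
    ∀ x ∈ (S.walk h).support, x ∉ (S.walk h').support := by
  intro x hx hx'
  have hne : s(a, b) ≠ s(a', b') := by
    rw [Ne, Sym2.eq_iff]
    rintro (⟨rfl, rfl⟩ | ⟨rfl, rfl⟩)
    · exact hc _ (Or.inl rfl) (Or.inl rfl)
    · exact hc _ (Or.inl rfl) (Or.inr rfl)
  obtain ⟨d, hd, hd', -⟩ := S.exists_common_endpoint h h' hne hx hx'
  exact hc d hd hd'

end SubdivCopy

section Ladder

variable {n : ℕ}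

lemma elemLadder_adj_rung (i : Fin n) : (elemLadder n).Adj (i, false) (i, true) := by
  simp [elemLadder]

lemma elemLadder_adj_succ {i j : Fin n} (hij : (j : ℕ) = i + 1) (s : Bool) :
    (elemLadder n).Adj (i, s) (j, s) := by
  simp [elemLadder, Prod.ext_iff, Fin.ext_iff, hij]

namespace SubdivCopy

variable {V : Type} {G : SimpleGraph V} (S : SubdivCopy (elemLadder n) G)

/-- The cycle formed by the rungs `i`, `i + 1` and the stringer segments between them. -/
def square (i : ℕ) (hi : i + 1 < n) : G.Square where
  top := S.walk (elemLadder_adj_rung ⟨i, by omega⟩)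
  bot := S.walk (elemLadder_adj_rung ⟨i + 1, hi⟩)
  left := S.walk (elemLadder_adj_succ (i := ⟨i, by omega⟩) (j := ⟨i + 1, hi⟩) rfl false)
  right := S.walk (elemLadder_adj_succ (i := ⟨i, by omega⟩) (j := ⟨i + 1, hi⟩) rfl true)
  top_isPath := S.walk_isPath _
  bot_isPath := S.walk_isPath _
  left_isPath := S.walk_isPath _
  right_isPath := S.walk_isPath _
  top_bot := S.notMem_support _ _ (by rintro d (rfl | rfl) (h | h) <;> simp [Prod.ext_iff] at h)
  left_right := S.notMem_support _ _ (by rintro d (rfl | rfl) (h | h) <;> simp [Prod.ext_iff] at h)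
  top_left _ := S.eq_branch_of_mem_support _ _
    (by rintro d (rfl | rfl) (h | h) <;> simp_all [Prod.ext_iff])
  top_right _ := S.eq_branch_of_mem_support _ _
    (by rintro d (rfl | rfl) (h | h) <;> simp_all [Prod.ext_iff])
  bot_left _ := S.eq_branch_of_mem_support _ _
    (by rintro d (rfl | rfl) (h | h) <;> simp_all [Prod.ext_iff])
  bot_right _ := S.eq_branch_of_mem_support _ _
    (by rintro d (rfl | rfl) (h | h) <;> simp_all [Prod.ext_iff])

lemma exists_walk_of_mem_square_verts {i : ℕ} {hi : i + 1 < n} {v : V}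
    (hv : v ∈ (S.square i hi).verts) :
    ∃ (a b : Fin n × Bool) (h : (elemLadder n).Adj a b),
      i ≤ a.1 ∧ (a.1 : ℕ) ≤ i + 1 ∧ i ≤ b.1 ∧ (b.1 : ℕ) ≤ i + 1 ∧ v ∈ (S.walk h).support := by
  rcases hv with hv | hv | hv | hv <;>
    exact ⟨_, _, _, by simp, by simp, by simp, by simp, hv⟩

lemma notMem_square_verts {i i' : ℕ} (hi : i + 1 < n) (hi' : i' + 1 < n) (hii' : i + 1 < i')
    {v : V} (hv : v ∈ (S.square i hi).verts) : v ∉ (S.square i' hi').verts := by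
  intro hv'
  obtain ⟨a, b, h, ha₁, ha₂, hb₁, hb₂, hx⟩ := S.exists_walk_of_mem_square_verts hv
  obtain ⟨a', b', h', ha₁', ha₂', hb₁', hb₂', hx'⟩ := S.exists_walk_of_mem_square_verts hv'
  exact S.notMem_support h h' (by rintro d (rfl | rfl) (rfl | rfl) <;> omega) v hx hx'

lemma exists_ne_mem_square_verts_succ {i : ℕ} (hi : i + 1 < n) (hi' : i + 1 + 1 < n) :
    ∃ x y, x ≠ y ∧ x ∈ (S.square i hi).verts ∧ y ∈ (S.square i hi).verts ∧
      x ∈ (S.square (i + 1) hi').verts ∧ y ∈ (S.square (i + 1) hi').verts :=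
  ⟨_, _, (S.square i hi).C_ne_D, Or.inr (Or.inl (Walk.start_mem_support _)),
    Or.inr (Or.inl (Walk.end_mem_support _)), Or.inl (Walk.start_mem_support _),
    Or.inl (Walk.end_mem_support _)⟩

end SubdivCopy

end Ladder

section CondensedWall

variable {r : ℕ}

lemma cwZ_injective : Function.Injective (cwZ : Fin (r + 1) → CWVert r) := by
  intro i i' h
  cases h
  rfl

lemma cwU_inj {j j' : Fin r} {k k' : Fin (2 * r)} : cwU j k = cwU j' k' ↔ j = j' ∧ k = k' := by
  constructor
  · intro h
    cases h
    exact ⟨rfl, rfl⟩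
  · rintro ⟨rfl, rfl⟩
    rfl

lemma cwU_ne_cwZ (j : Fin r) (k : Fin (2 * r)) (i : Fin (r + 1)) : cwU j k ≠ cwZ i := nofun

lemma condensedWall.adj_cwU_cwU {j j' : Fin r} {k k' : Fin (2 * r)}
    (h : (condensedWall r).Adj (cwU j k) (cwU j' k')) :
    j = j' ∧ ((k' : ℕ) = k + 1 ∨ (k : ℕ) = k' + 1) := by
  rcases ((fromRel_adj _ _ _).mp h).2 with ⟨hj, hk⟩ | ⟨hj, hk⟩
  · exact ⟨hj, Or.inl hk⟩
  · exact ⟨hj.symm, Or.inr hk⟩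

lemma condensedWall.adj_cwZ_cwZ {i i' : Fin (r + 1)} (h : (condensedWall r).Adj (cwZ i) (cwZ i')) :
    (i' : ℕ) = i + 1 ∨ (i : ℕ) = i' + 1 :=
  ((fromRel_adj _ _ _).mp h).2

lemma condensedWall.adj_cwZ_cwU {i : Fin (r + 1)} {j : Fin r} {k : Fin (2 * r)}
    (h : (condensedWall r).Adj (cwZ i) (cwU j k)) : (i : ℕ) = j ∨ (i : ℕ) = j + 1 := by
  rcases ((fromRel_adj _ _ _).mp h).2 with (⟨hi, -⟩ | ⟨hi, -⟩) | h
  · exact Or.inl hi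
  · exact Or.inr hi
  · exact h.elim

namespace CWVert

/-- The index of the layer of a path vertex, or of a bottleneck vertex (junk `0` at `a`, `b`). -/
def level : CWVert r → ℕ
  | Sum.inl (j, _) => j
  | Sum.inr (Sum.inl i) => i
  | Sum.inr (Sum.inr _) => 0

/-- The position of a vertex along its horizontal path, or along the path `z_0 … z_r`. -/
def pos : CWVert r → ℕ
  | Sum.inl (_, k) => k
  | Sum.inr (Sum.inl i) => i
  | Sum.inr (Sum.inr _) => 0

@[simp] lemma level_cwU (j : Fin r) (k : Fin (2 * r)) : (cwU j k).level = j := rfl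
@[simp] lemma level_cwZ (i : Fin (r + 1)) : (cwZ i : CWVert r).level = i := rfl
@[simp] lemma pos_cwU (j : Fin r) (k : Fin (2 * r)) : (cwU j k).pos = k := rfl
@[simp] lemma pos_cwZ (i : Fin (r + 1)) : (cwZ i : CWVert r).pos = i := rfl

end CWVert

namespace WMVert

def z (i : Fin (r + 1)) : WMVert r := ⟨cwZ i, nofun, nofun⟩

lemma exists_eq (x : WMVert r) : (∃ j k, x.val = cwU j k) ∨ ∃ i, x.val = cwZ i := by
  obtain ⟨(⟨j, k⟩ | i | _ | _), ha, hb⟩ := x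
  · exact Or.inl ⟨j, k, rfl⟩
  · exact Or.inr ⟨i, rfl⟩
  · exact (ha rfl).elim
  · exact (hb rfl).elim

end WMVert

lemma wallMinusAB_adj {x y : WMVert r} :
    (wallMinusAB r).Adj x y ↔ (condensedWall r).Adj x.val y.val := Iff.rfl

/-- `z_m` separates the layers below it from those above it. -/
lemma wallMinusAB_isLocallyConstOff (m : Fin (r + 1)) :
    (wallMinusAB r).IsLocallyConstOff (WMVert.z m) (fun x => x.val.level < m) := by
  intro x y h hxm hym
  replace hxm : x.val ≠ cwZ m := fun e => hxm (Subtype.ext e)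
  replace hym : y.val ≠ cwZ m := fun e => hym (Subtype.ext e)
  rw [wallMinusAB_adj] at h
  show (x.val.level < m) = (y.val.level < m)
  obtain ⟨j, k, hx⟩ | ⟨i, hx⟩ := x.exists_eq <;> obtain ⟨j', k', hy⟩ | ⟨i', hy⟩ := y.exists_eq <;>
    rw [hx, hy] at h <;> rw [hx] at hxm ⊢ <;> rw [hy] at hym ⊢ <;>
    simp only [CWVert.level_cwU, CWVert.level_cwZ, eq_iff_iff]
  · rw [(condensedWall.adj_cwU_cwU h).1]
  · have := condensedWall.adj_cwZ_cwU h.symm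
    have := Fin.val_ne_of_ne (fun e => hym (congrArg cwZ e))
    omega
  · have := condensedWall.adj_cwZ_cwU h
    have := Fin.val_ne_of_ne (fun e => hxm (congrArg cwZ e))
    omega
  · have := condensedWall.adj_cwZ_cwZ h
    have := Fin.val_ne_of_ne (fun e => hxm (congrArg cwZ e))
    have := Fin.val_ne_of_ne (fun e => hym (congrArg cwZ e))
    omega

lemma wallMinusAB_isPathCoordOn_bottlenecks :
    (wallMinusAB r).IsPathCoordOn {x | ∃ i, x.val = cwZ i} (fun x => x.val.pos) := by
  constructor
  · rintro x ⟨i, hx⟩ y ⟨i', hy⟩ h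
    simp only [hx, hy, CWVert.pos_cwZ] at h
    exact Subtype.ext (by rw [hx, hy, Fin.ext h])
  · rintro x ⟨i, hx⟩ y ⟨i', hy⟩ h
    rw [wallMinusAB_adj, hx, hy] at h
    have := condensedWall.adj_cwZ_cwZ h
    simp only [hx, hy, CWVert.pos_cwZ]
    omega

lemma wallMinusAB_isPathCoordOn_layer (j : Fin r) :
    (wallMinusAB r).IsPathCoordOn {x | ∃ k, x.val = cwU j k} (fun x => x.val.pos) := by
  constructor
  · rintro x ⟨k, hx⟩ y ⟨k', hy⟩ h
    simp only [hx, hy, CWVert.pos_cwU] at h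
    exact Subtype.ext (by rw [hx, hy, Fin.ext h])
  · rintro x ⟨k, hx⟩ y ⟨k', hy⟩ h
    rw [wallMinusAB_adj, hx, hy] at h
    have := (condensedWall.adj_cwU_cwU h).2
    simp only [hx, hy, CWVert.pos_cwU]
    omega

end CondensedWall

section Layers

variable {r : ℕ}

lemma cwU_mem_layerVerts {j j' : Fin r} {k : Fin (2 * r)} :
    cwU j' k ∈ layerVerts r j ↔ j' = j := by
  constructor
  · rintro (⟨k', h⟩ | h | h)
    · exact (cwU_inj.mp h).1
    · exact (cwU_ne_cwZ _ _ _ h).elim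
    · exact (cwU_ne_cwZ _ _ _ h).elim
  · rintro rfl
    exact Or.inl ⟨k, rfl⟩

lemma cwZ_mem_layerVerts {i : Fin (r + 1)} {j : Fin r} :
    cwZ i ∈ layerVerts r j ↔ (i : ℕ) = j ∨ (i : ℕ) = j + 1 := by
  constructor
  · rintro (⟨k, h⟩ | h | h)
    · exact (cwU_ne_cwZ _ _ _ h.symm).elim
    · exact Or.inl (by simp [cwZ_injective h])
    · exact Or.inr (by simp [cwZ_injective h])
  · rintro (h | h)
    · exact Or.inr (Or.inl (congrArg cwZ (Fin.ext h)))
    · exact Or.inr (Or.inr (congrArg cwZ (Fin.ext h)))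

/-- Two distinct layers meet only in the bottleneck vertex between them. -/
lemma eq_cwZ_of_mem_layerVerts {j j' : Fin r} (hjj' : j ≠ j') {x : CWVert r}
    (hx : x ∈ layerVerts r j) (hx' : x ∈ layerVerts r j') :
    x = cwZ ⟨max j j', by omega⟩ := by
  have hjj'' := Fin.val_ne_of_ne hjj'
  rcases hx with ⟨k, rfl⟩ | rfl | rfl
  · exact (hjj' (cwU_mem_layerVerts.mp hx')).elim
  · have := cwZ_mem_layerVerts.mp hx'
    exact congrArg cwZ (Fin.ext (by simp only [Fin.val_castSucc] at this ⊢; omega))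
  · have := cwZ_mem_layerVerts.mp hx'
    exact congrArg cwZ (Fin.ext (by simp only [Fin.val_succ] at this ⊢; omega))

lemma eq_of_mem_layerVerts {j j' : Fin r} {x y : CWVert r} (hxy : x ≠ y)
    (hx : x ∈ layerVerts r j) (hy : y ∈ layerVerts r j)
    (hx' : x ∈ layerVerts r j') (hy' : y ∈ layerVerts r j') : j = j' := by
  by_contra h
  exact hxy ((eq_cwZ_of_mem_layerVerts h hx hx').trans (eq_cwZ_of_mem_layerVerts h hy hy').symm)

lemma mem_layerVerts_of_level (x : WMVert r) {j : Fin r}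
    (h₁ : x.val ≠ cwZ j.castSucc → j ≤ x.val.level) (h₂ : x.val ≠ cwZ j.succ → x.val.level ≤ j) :
    x.val ∈ layerVerts r j := by
  obtain ⟨j', k, hx⟩ | ⟨i, hx⟩ := x.exists_eq <;> rw [hx] at h₁ h₂ ⊢
  · simp only [CWVert.level_cwU] at h₁ h₂
    exact cwU_mem_layerVerts.mpr
      (Fin.ext (le_antisymm (h₂ (cwU_ne_cwZ _ _ _)) (h₁ (cwU_ne_cwZ _ _ _))))
  · rw [cwZ_mem_layerVerts]
    by_contra! h
    simp only [CWVert.level_cwZ] at h₁ h₂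
    have := h₁ (fun e => h.1 (by simp [cwZ_injective e]))
    have := h₂ (fun e => h.2 (by simp [cwZ_injective e]))
    omega

namespace SimpleGraph.Square

variable (Q : (wallMinusAB r).Square)

lemma exists_layerVerts : ∃ j, ∀ v ∈ Q.verts, v.val ∈ layerVerts r j := by
  by_cases hu : ∃ u ∈ Q.verts, ∃ j k, u.val = cwU j k
  · obtain ⟨u, hu, j, k, hu'⟩ := hu
    have side (m : Fin (r + 1)) {v} (hv : v ∈ Q.verts) (hvm : v.val ≠ cwZ m) :
        (v.val.level < m) = ((j : ℕ) < m) := by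
      have := Q.eq_of_mem_verts (wallMinusAB_isLocallyConstOff m) hv hu
        (fun e => hvm (congrArg Subtype.val e))
        (fun e => cwU_ne_cwZ j k m (hu' ▸ congrArg Subtype.val e))
      simpa [hu'] using this
    refine ⟨j, fun v hv => mem_layerVerts_of_level v (fun h => ?_) (fun h => ?_)⟩
    · simpa using side j.castSucc hv h
    · simpa [Nat.lt_succ_iff] using side j.succ hv h
  · push Not at hu
    refine absurd (fun v hv => ?_) (Q.not_verts_subset wallMinusAB_isPathCoordOn_bottlenecks)
    obtain ⟨j, k, h⟩ | h := v.exists_eq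
    · exact absurd h (hu v hv j k)
    · exact h

lemma exists_mem_verts_eq_cwZ {j : Fin r} (hQ : ∀ v ∈ Q.verts, v.val ∈ layerVerts r j) :
    ∃ v ∈ Q.verts, v.val = cwZ j.castSucc ∨ v.val = cwZ j.succ := by
  by_contra! h
  refine Q.not_verts_subset (wallMinusAB_isPathCoordOn_layer j) (fun v hv => ?_)
  rcases hQ v hv with hk | h' | h'
  · exact hk
  · exact absurd h' (h v hv).1
  · exact absurd h' (h v hv).2

end SimpleGraph.Square

end Layers

lemma SubdivCopy.exists_layerVerts_forall_square {r n : ℕ}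
    (S : SubdivCopy (elemLadder n) (wallMinusAB r)) (hn : 1 < n) :
    ∃ j, ∀ i (hi : i + 1 < n), ∀ v ∈ (S.square i hi).verts, v.val ∈ layerVerts r j := by
  obtain ⟨j, hj⟩ := (S.square 0 hn).exists_layerVerts
  refine ⟨j, fun i => ?_⟩
  induction i with
  | zero => exact fun _ => hj
  | succ i ih =>
    intro hi
    obtain ⟨j', hj'⟩ := (S.square (i + 1) hi).exists_layerVerts
    obtain ⟨x, y, hxy, hx, hy, hx', hy'⟩ := S.exists_ne_mem_square_verts_succ (by omega) hi
    obtain rfl := eq_of_mem_layerVerts (Subtype.val_injective.ne hxy)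
      (ih _ x hx) (ih _ y hy) (hj' x hx') (hj' y hy')
    exact hj'

/-- Every ladder contained in `W − {a, b}` has at most 5 rungs. -/
theorem ladder_in_wall_minus_ab_le_five (r n : ℕ)
    (S : SubdivCopy (elemLadder n) (wallMinusAB r)) : n ≤ 5 := by
  by_contra! hn
  obtain ⟨j, hj⟩ := S.exists_layerVerts_forall_square (by omega)
  obtain ⟨v₀, hv₀, h₀⟩ := (S.square 0 (by omega)).exists_mem_verts_eq_cwZ (hj 0 _)
  obtain ⟨v₂, hv₂, h₂⟩ := (S.square 2 (by omega)).exists_mem_verts_eq_cwZ (hj 2 _)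
  obtain ⟨v₄, hv₄, h₄⟩ := (S.square 4 (by omega)).exists_mem_verts_eq_cwZ (hj 4 _)
  have hpigeon : v₀.val = v₂.val ∨ v₀.val = v₄.val ∨ v₂.val = v₄.val := by
    rcases h₀ with h₀ | h₀ <;> rcases h₂ with h₂ | h₂ <;> rcases h₄ with h₄ | h₄ <;>
      simp [h₀, h₂, h₄]
  rcases hpigeon with h | h | h
  · exact S.notMem_square_verts _ _ (by omega) hv₀ (Subtype.ext h ▸ hv₂)
  · exact S.notMem_square_verts _ _ (by omega) hv₀ (Subtype.ext h ▸ hv₄)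
  · exact S.notMem_square_verts _ _ (by omega) hv₂ (Subtype.ext h ▸ hv₄)
end

section
/- Let T be a tree, let k, m be positive integers, and let f : V(T) → {0,1} be a mark on T with at least 2mk marked vertices. Then there exist edge-disjoint subtrees T_1, …, T_k of T with T_1 ∪ … ∪ T_k = T, together with pairwise disjoint sets A_1, …, A_k of marked vertices such that |A_p| ≥ m and A_p ⊆ V(T_p) for every p ∈ [k]. -/
/-! Generalise the marks to weights `w : V → ℕ` bounded by `m`, so that a piece needs weight at
least `m`, and induct on the number of vertices. Remove a leaf `ℓ` with neighbour `u`.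
If `w u + w ℓ ≤ m`, move the weight of `ℓ` onto `u`, decompose the smaller tree, and let the
piece owning `u` (or any piece through `u`) absorb the edge `ℓu` and the vertex `ℓ`.
Otherwise the edge `ℓu` on its own is a piece of weight `w ℓ + w u ≤ 2m`; give `u` weight zero
and decompose the smaller tree into `k - 1` pieces. -/

open SimpleGraph

open Function

theorem Pairwise.update {ι α : Type*} [DecidableEq ι] {r : α → α → Prop}
    (hr : ∀ ⦃a b⦄, r a b → r b a) {f : ι → α} (hf : Pairwise (r on f)) {i : ι} {a : α}
    (ha : ∀ j ≠ i, r a (f j)) : Pairwise (r on update f i a) := by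
  intro j j' hjj'
  rcases eq_or_ne j i with rfl | hj
  · simpa [onFun, hjj'.symm] using ha j' hjj'.symm
  rcases eq_or_ne j' i with rfl | hj'
  · simpa [onFun, hj] using hr (ha j hj)
  · simpa [onFun, hj, hj'] using hf hjj'

theorem Pairwise.fin_cons {n : ℕ} {α : Type*} {r : α → α → Prop}
    (hr : ∀ ⦃a b⦄, r a b → r b a) {f : Fin n → α} (hf : Pairwise (r on f)) {a : α}
    (ha : ∀ i, r a (f i)) : Pairwise (r on (Fin.cons a f : Fin (n + 1) → α)) := by
  intro i j hij
  cases i using Fin.cases <;> cases j using Fin.cases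
  · exact absurd rfl hij
  · exact ha _
  · exact hr (ha _)
  · exact hf fun h => hij (congrArg Fin.succ h)

theorem iSup_update_sup {ι α : Type*} [DecidableEq ι] [CompleteLattice α] (f : ι → α) (i : ι)
    (a : α) : ⨆ j, update f i (f i ⊔ a) j = (⨆ j, f j) ⊔ a := by
  rw [iSup_split_single _ i, iSup_split_single f i, update_self, sup_right_comm]
  congr 2
  exact iSup_congr fun j => iSup_congr fun hj => update_of_ne hj _ _

theorem iSup_fin_cons {n : ℕ} {α : Type*} [CompleteLattice α] (a : α) (f : Fin n → α) :
    ⨆ i, (Fin.cons a f : Fin (n + 1) → α) i = a ⊔ ⨆ i, f i := by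
  refine le_antisymm (iSup_le fun i => ?_) (sup_le ?_ (iSup_le fun i => ?_))
  · cases i using Fin.cases
    · exact le_sup_left
    · exact le_sup_of_le_right (le_iSup f _)
  · exact le_iSup_of_le 0 le_rfl
  · exact le_iSup_of_le i.succ (by simp)

namespace Finset

variable {α M : Type*} [DecidableEq α]

theorem sum_update_add_self [AddCommMonoid M] {s : Finset α} {a : α} (ha : a ∈ s) (f : α → M)
    (b : M) : ∑ x ∈ s, update f a b x + f a = ∑ x ∈ s, f x + b := by
  rw [sum_update_of_mem ha, sum_eq_add_sum_sdiff_singleton_of_mem ha f]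
  abel

theorem sum_update_add_le_sum_insert {s : Finset α} {a b : α} (ha : a ∉ s) (f : α → ℕ) :
    ∑ x ∈ s, update f b (f b + f a) x ≤ ∑ x ∈ insert a s, f x := by
  rw [sum_insert ha]
  by_cases hb : b ∈ s
  · have := sum_update_add_self hb f (f b + f a)
    omega
  · rw [sum_update_of_notMem hb]
    omega

end Finset

namespace SimpleGraph

variable {V ι : Type*} {G : SimpleGraph V}

lemma IsAcyclic.coe_subgraph (hG : G.IsAcyclic) (H : G.Subgraph) : H.coe.IsAcyclic :=
  hG.comap H.hom Subgraph.hom_injective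

namespace Subgraph

lemma Preconnected.deleteVerts_of_subsingleton_neighborSet {H : G.Subgraph}
    (hH : H.Preconnected) {s : Set V} (hs : ∀ v ∈ s, (H.neighborSet v).Subsingleton) :
    (H.deleteVerts s).Preconnected := by
  classical
  rw [preconnected_iff_forall_exists_walk_subgraph] at hH ⊢
  rintro x y ⟨hxH, hxs⟩ ⟨hyH, hys⟩
  obtain ⟨p, hpH⟩ := hH hxH hyH
  have hqH : p.bypass.toSubgraph ≤ H := Walk.toSubgraph_bypass_le_toSubgraph.trans hpH
  have hedges : ∀ e ∈ p.bypass.edges, e ∈ H.spanningCoe.edgeSet := fun e he =>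
    edgeSet_mono hqH ((Walk.mem_edges_toSubgraph _).mpr he)
  have hsupp : ∀ z ∈ p.bypass.toSubgraph.verts, z ∉ s := fun z hz hzs =>
    (p.bypass_isPath.transfer hedges).isTrail.not_mem_support_of_subsingleton_neighborSet
      (ne_of_mem_of_not_mem hzs hxs) (ne_of_mem_of_not_mem hzs hys) (hs z hzs)
      (by rwa [Walk.support_transfer, ← Walk.mem_verts_toSubgraph])
  refine ⟨p.bypass, fun z hz => ⟨hqH.1 hz, hsupp z hz⟩, fun a b hab => ?_⟩
  exact ⟨⟨hqH.1 hab.fst_mem, hsupp a hab.fst_mem⟩, ⟨hqH.1 hab.snd_mem, hsupp b hab.snd_mem⟩,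
    hqH.2 hab⟩

lemma Connected.exists_neighborSet_eq_singleton [Finite V] {H : G.Subgraph} (hH : H.Connected)
    (hG : G.IsAcyclic) (hnt : H.verts.Nontrivial) : ∃ ℓ u, H.neighborSet ℓ = {u} := by
  classical
  have := Fintype.ofFinite V
  have : Nontrivial H.verts := hnt.coe_sort
  obtain ⟨ℓ, hℓ⟩ := IsTree.exists_vert_degree_one_of_nontrivial ⟨hH.coe, hG.coe_subgraph H⟩
  rw [coe_degree] at hℓ
  obtain ⟨u, hℓu, hu⟩ := degree_eq_one_iff_existsUnique_adj.mp hℓ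
  exact ⟨ℓ, u, Set.eq_singleton_iff_unique_mem.mpr ⟨hℓu, hu⟩⟩

lemma eq_deleteVerts_sup_subgraphOfAdj {H : G.Subgraph} {ℓ u : V} (hadj : G.Adj ℓ u)
    (hℓ : H.neighborSet ℓ = {u}) : H = H.deleteVerts {ℓ} ⊔ G.subgraphOfAdj hadj := by
  have hnbr : ∀ x, H.Adj ℓ x ↔ x = u := fun x => Set.ext_iff.mp hℓ x
  have hℓH : ℓ ∈ H.verts := H.edge_vert ((hnbr u).mpr rfl)
  have huH : u ∈ H.verts := H.edge_vert ((hnbr u).mpr rfl).symm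
  ext x y
  · simp only [verts_sup, deleteVerts_verts, subgraphOfAdj_verts]
    grind
  · simp only [sup_adj, deleteVerts_adj, subgraphOfAdj_adj]
    have := hnbr x
    have := hnbr y
    have := H.adj_comm x y
    have : H.Adj x y → x ∈ H.verts ∧ y ∈ H.verts := fun h => ⟨h.fst_mem, h.snd_mem⟩
    grind

lemma Connected.exists_eq_sup_subgraphOfAdj [Finite V] {H : G.Subgraph} (hH : H.Connected)
    (hG : G.IsAcyclic) (hnt : H.verts.Nontrivial) :
    ∃ (H' : G.Subgraph) (ℓ u : V) (hadj : G.Adj ℓ u),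
      H'.Connected ∧ ℓ ∉ H'.verts ∧ u ∈ H'.verts ∧ H = H' ⊔ G.subgraphOfAdj hadj := by
  obtain ⟨ℓ, u, hℓ⟩ := hH.exists_neighborSet_eq_singleton hG hnt
  have hadj : H.Adj ℓ u := (hℓ.symm ▸ Set.mem_singleton u : u ∈ H.neighborSet ℓ)
  have hu : u ∈ (H.deleteVerts {ℓ}).verts := ⟨hadj.snd_mem, hadj.ne.symm⟩
  refine ⟨_, ℓ, u, H.adj_sub hadj, Subgraph.connected_iff.mpr ⟨?_, u, hu⟩, fun h => h.2 rfl, hu,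
    eq_deleteVerts_sup_subgraphOfAdj _ hℓ⟩
  exact hH.preconnected.deleteVerts_of_subsingleton_neighborSet (by simp [hℓ])

structure IsWeightedDecomposition (H : G.Subgraph) (w : V → ℕ) (m : ℕ)
    (Ts : ι → G.Subgraph) (A : ι → Finset V) : Prop where
  connected : ∀ i, (Ts i).Connected
  pairwise_disjoint_edgeSet : Pairwise fun i j => Disjoint (Ts i).edgeSet (Ts j).edgeSet
  iSup_eq : ⨆ i, Ts i = H
  subset_verts : ∀ i, ↑(A i) ⊆ (Ts i).verts
  pairwise_disjoint : Pairwise fun i j => Disjoint (A i) (A j)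
  le_sum : ∀ i, m ≤ ∑ v ∈ A i, w v

lemma isWeightedDecomposition_const [Unique ι] {H : G.Subgraph} (hH : H.Connected) {w : V → ℕ}
    {m : ℕ} {s : Finset V} (hs : ↑s ⊆ H.verts) (hm : m ≤ ∑ v ∈ s, w v) :
    H.IsWeightedDecomposition w m (fun _ : ι => H) (fun _ => s) :=
  ⟨fun _ => hH, Subsingleton.pairwise, iSup_const, fun _ => hs, Subsingleton.pairwise,
    fun _ => hm⟩

namespace IsWeightedDecomposition

variable {H : G.Subgraph} {w : V → ℕ} {m : ℕ} {Ts : ι → G.Subgraph} {A : ι → Finset V}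

lemma le (hD : H.IsWeightedDecomposition w m Ts A) (i : ι) : Ts i ≤ H :=
  hD.iSup_eq ▸ le_iSup Ts i

lemma mem_verts (hD : H.IsWeightedDecomposition w m Ts A) {i : ι} {v : V} (hv : v ∈ A i) :
    v ∈ H.verts :=
  (hD.le i).1 (hD.subset_verts i hv)

lemma notMem_edgeSet_of_notMem_verts (hD : H.IsWeightedDecomposition w m Ts A) {ℓ u : V}
    (hℓ : ℓ ∉ H.verts) (i : ι) : s(ℓ, u) ∉ (Ts i).edgeSet :=
  fun h => hℓ ((hD.le i).1 ((Ts i).edge_vert h))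

lemma exists_mem_verts_and_forall_mem_eq (hD : H.IsWeightedDecomposition w m Ts A) {u : V}
    (hu : u ∈ H.verts) : ∃ i, u ∈ (Ts i).verts ∧ ∀ j, u ∈ A j → j = i := by
  by_cases h : ∃ j, u ∈ A j
  · obtain ⟨i, hi⟩ := h
    exact ⟨i, hD.subset_verts i hi, fun j hj =>
      hD.pairwise_disjoint.eq (Finset.not_disjoint_iff.mpr ⟨u, hj, hi⟩)⟩
  · obtain ⟨i, hi⟩ := Set.mem_iUnion.mp (verts_iSup ▸ hD.iSup_eq ▸ hu : u ∈ ⋃ i, (Ts i).verts)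
    exact ⟨i, hi, fun j hj => absurd ⟨j, hj⟩ h⟩

lemma exists_sup_subgraphOfAdj [DecidableEq V] [DecidableEq ι] {ℓ u : V} (hadj : G.Adj ℓ u)
    (hℓ : ℓ ∉ H.verts) (hu : u ∈ H.verts)
    (hD : H.IsWeightedDecomposition (update w u (w u + w ℓ)) m Ts A) :
    ∃ (Ts' : ι → G.Subgraph) (A' : ι → Finset V),
      (H ⊔ G.subgraphOfAdj hadj).IsWeightedDecomposition w m Ts' A' := by
  obtain ⟨i, hui, hAu⟩ := hD.exists_mem_verts_and_forall_mem_eq hu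
  have hℓA : ∀ j, ℓ ∉ A j := fun j hj => hℓ (hD.mem_verts hj)
  refine ⟨update Ts i (Ts i ⊔ G.subgraphOfAdj hadj), update A i (insert ℓ (A i)),
    ⟨fun j => ?_, ?_, ?_, fun j => ?_, ?_, fun j => ?_⟩⟩
  · rcases eq_or_ne j i with rfl | hj
    · rw [update_self]
      exact connected_sup (hD.connected j).preconnected
        (subgraphOfAdj_connected hadj).preconnected ⟨u, hui, by simp⟩
    · rw [update_of_ne hj]
      exact hD.connected j
  · refine hD.pairwise_disjoint_edgeSet.update
      (r := fun K K' : G.Subgraph => Disjoint K.edgeSet K'.edgeSet)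
      (fun _ _ h => h.symm) fun j hj => ?_
    rw [edgeSet_sup, edgeSet_subgraphOfAdj, Set.disjoint_union_left, Set.disjoint_singleton_left]
    exact ⟨hD.pairwise_disjoint_edgeSet hj.symm, hD.notMem_edgeSet_of_notMem_verts hℓ j⟩
  · rw [iSup_update_sup, hD.iSup_eq]
  · rcases eq_or_ne j i with rfl | hj
    · simp only [update_self, Finset.coe_insert, verts_sup, subgraphOfAdj_verts]
      exact Set.insert_subset (Or.inr (Set.mem_insert ℓ {u}))
        ((hD.subset_verts j).trans Set.subset_union_left)
    · simpa [hj] using hD.subset_verts j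
  · refine hD.pairwise_disjoint.update (fun _ _ h => h.symm) fun j hj => ?_
    exact Finset.disjoint_insert_left.mpr ⟨hℓA j, hD.pairwise_disjoint hj.symm⟩
  · rcases eq_or_ne j i with rfl | hj
    · rw [update_self]
      exact (hD.le_sum j).trans (Finset.sum_update_add_le_sum_insert (hℓA j) w)
    · rw [update_of_ne hj]
      exact (hD.le_sum j).trans_eq (Finset.sum_update_of_notMem (fun h => hj (hAu j h)) _ _)

lemma fin_cons_subgraphOfAdj [DecidableEq V] {k : ℕ} {Ts : Fin k → G.Subgraph}
    {A : Fin k → Finset V} {ℓ u : V} (hadj : G.Adj ℓ u) (hℓ : ℓ ∉ H.verts)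
    (hm : m ≤ w ℓ + w u) (hD : H.IsWeightedDecomposition (update w u 0) m Ts A) :
    (H ⊔ G.subgraphOfAdj hadj).IsWeightedDecomposition w m
      (Fin.cons (G.subgraphOfAdj hadj) Ts : Fin (k + 1) → G.Subgraph)
      (Fin.cons {ℓ, u} fun i => (A i).erase u : Fin (k + 1) → Finset V) := by
  have hℓA : ∀ i, ℓ ∉ A i := fun i hi => hℓ (hD.mem_verts hi)
  refine ⟨fun i => ?_, ?_, ?_, fun i => ?_, ?_, fun i => ?_⟩
  · cases i using Fin.cases
    · exact subgraphOfAdj_connected hadj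
    · exact hD.connected _
  · refine hD.pairwise_disjoint_edgeSet.fin_cons
      (r := fun K K' : G.Subgraph => Disjoint K.edgeSet K'.edgeSet)
      (fun _ _ h => h.symm) fun i => ?_
    rw [edgeSet_subgraphOfAdj, Set.disjoint_singleton_left]
    exact hD.notMem_edgeSet_of_notMem_verts hℓ i
  · rw [iSup_fin_cons, hD.iSup_eq, sup_comm]
  · cases i using Fin.cases
    · simp
    · exact (Finset.coe_subset.mpr (Finset.erase_subset _ _)).trans (hD.subset_verts _)
  · refine Pairwise.fin_cons (fun _ _ h => h.symm)
      (fun i j hij => (hD.pairwise_disjoint hij).mono (Finset.erase_subset _ _)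
        (Finset.erase_subset _ _)) fun i => ?_
    simp [hℓA i]
  · cases i using Fin.cases
    · simpa [Finset.sum_pair hadj.ne] using hm
    · simp only [Fin.cons_succ]
      rw [← Finset.sum_update_of_notMem (Finset.notMem_erase u _) w 0,
        Finset.sum_erase _ (update_self u 0 w)]
      exact hD.le_sum _

end IsWeightedDecomposition

open Classical in
theorem exists_isWeightedDecomposition [Fintype V] (hG : G.IsAcyclic) {m : ℕ} (hm : 0 < m)
    {w : V → ℕ} (hw : ∀ v, w v ≤ m) {H : G.Subgraph} (hH : H.Connected) {k : ℕ} (hk : 0 < k)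
    (hsum : 2 * m * k ≤ ∑ v ∈ H.verts.toFinset, w v) :
    ∃ (Ts : Fin k → G.Subgraph) (A : Fin k → Finset V), H.IsWeightedDecomposition w m Ts A := by
  rcases Nat.lt_or_ge k 2 with hk2 | hk2
  · obtain rfl : k = 1 := by omega
    exact ⟨_, _, isWeightedDecomposition_const hH (s := H.verts.toFinset) (by simp) (by omega)⟩
  have hnt : H.verts.Nontrivial := by
    rw [← Set.toFinset_nontrivial, ← Finset.one_lt_card_iff_nontrivial]
    have := Finset.sum_le_card_nsmul H.verts.toFinset w m fun v _ => hw v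
    rw [smul_eq_mul] at this
    nlinarith
  obtain ⟨H', ℓ, u, hadj, hH', hℓ, hu, hdec⟩ := hH.exists_eq_sup_subgraphOfAdj hG hnt
  have hverts : H.verts = insert ℓ H'.verts := by
    rw [hdec, verts_sup, subgraphOfAdj_verts, Set.union_insert, Set.union_singleton,
      Set.insert_eq_of_mem hu]
  have hlt : H'.verts.ncard < H.verts.ncard := by
    rw [hverts, Set.ncard_insert_of_notMem hℓ]
    omega
  have hsplit : ∑ v ∈ H.verts.toFinset, w v = w ℓ + ∑ v ∈ H'.verts.toFinset, w v := by
    simp [hverts, Finset.sum_insert, hℓ]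
  have hupd := fun c => Finset.sum_update_add_self (Set.mem_toFinset.mpr hu) w c
  have hupd_le : ∀ c ≤ m, ∀ v, update w u c v ≤ m := fun c hc v => by
    rw [update_apply]
    split_ifs <;> simp [hc, hw]
  rw [hdec]
  by_cases hsmall : w u + w ℓ ≤ m
  · obtain ⟨Ts, A, hD⟩ := exists_isWeightedDecomposition hG hm (hupd_le _ hsmall) hH' hk
      (by have := hupd (w u + w ℓ); omega)
    exact hD.exists_sup_subgraphOfAdj hadj hℓ hu
  · obtain ⟨k, rfl⟩ : ∃ j, k = j + 1 := ⟨k - 1, by omega⟩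
    obtain ⟨Ts, A, hD⟩ := exists_isWeightedDecomposition hG hm (hupd_le 0 hm.le) hH'
      (k := k) (by omega) (by have := hupd 0; have := hw ℓ; have := hw u; nlinarith)
    exact ⟨_, _, hD.fin_cons_subgraphOfAdj hadj hℓ (by omega)⟩
termination_by H.verts.ncard

end Subgraph

end SimpleGraph

/-- A tree with at least `2mk` marked vertices can be decomposed into `k` edge-disjoint
subtrees covering it, each containing `m` marked vertices of its own. -/
theorem tree_decomposition_with_marks (V : Type) [Fintype V] (T : SimpleGraph V)
    (hT : T.IsTree) (k m : ℕ) (hk : 0 < k) (hm : 0 < m) (f : V → Fin 2)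
    (hmark : 2 * m * k ≤ {v : V | f v = 1}.ncard) :
    ∃ (Ts : Fin k → T.Subgraph) (A : Fin k → Set V),
      (∀ p, (Ts p).coe.IsTree) ∧
      (∀ p q, p ≠ q → Disjoint (Ts p).edgeSet (Ts q).edgeSet) ∧
      (⨆ p, Ts p) = ⊤ ∧
      (∀ p, A p ⊆ (Ts p).verts) ∧
      (∀ p, ∀ v ∈ A p, f v = 1) ∧
      (∀ p, m ≤ (A p).ncard) ∧
      (∀ p q, p ≠ q → Disjoint (A p) (A q)) := by
  classical
  let w : V → ℕ := fun v => if f v = 1 then 1 else 0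
  have hw : ∀ v, w v ≤ m := fun v => by simp only [w]; split <;> omega
  have htop : (⊤ : T.Subgraph).Connected :=
    Subgraph.connected_iff'.mpr (Subgraph.topIso.connected_iff.mpr hT.connected)
  obtain ⟨Ts, A, hD⟩ := Subgraph.exists_isWeightedDecomposition hT.isAcyclic hm hw htop hk
    (by simpa [w, Finset.sum_boole, Set.ncard_eq_toFinset_card'] using hmark)
  refine ⟨Ts, fun p => ↑((A p).filter fun v => f v = 1), fun p => ⟨(hD.connected p).coe,
    hT.isAcyclic.coe_subgraph _⟩, hD.pairwise_disjoint_edgeSet, hD.iSup_eq,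
    fun p => ?_, fun p v hv => (Finset.mem_filter.mp hv).2, fun p => ?_, fun p q hpq => ?_⟩
  · exact (Finset.coe_subset.mpr (Finset.filter_subset _ _)).trans (hD.subset_verts p)
  · rw [Set.ncard_coe_finset]
    simpa [w, Finset.sum_boole] using hD.le_sum p
  · exact Finset.disjoint_coe.mpr (Finset.disjoint_filter_filter (hD.pairwise_disjoint hpq))
end
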